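/- Let φ = P₁⋯Pₙλ be a hybrid formula where each P_i is an operator from {◇,□} ∪ {↓x. : x a state variable}, and λ is one of: a proposition p, a negated proposition ¬p, a nominal n, a negated nominal ¬n, a state variable x, ⊤, ⊥, or a negated state variable ¬x where x is NOT bound by any binder ↓x. among P₁,…,Pₙ. Then φ is unsatisfiable over the class of total frames if and only if λ = ⊥, and φ is unsatisfiable over the class of ER frames if and only if λ = ⊥. -/

import Mathlib

/-- Hybrid logic formulas over countable sets of atomic propositions,
nominals and state variables (each indexed by `ℕ`). -/
inductive HForm : Type where
  | prop : ℕ → HForm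
  | nom  : ℕ → HForm
  | svar : ℕ → HForm
  | top  : HForm
  | bot  : HForm
  | neg  : HForm → HForm
  | and  : HForm → HForm → HForm
  | or   : HForm → HForm → HForm
  | dia  : HForm → HForm
  | box  : HForm → HForm
  | bind : ℕ → HForm → HForm
  | atN  : ℕ → HForm → HForm
  | atV  : ℕ → HForm → HForm
deriving DecidableEq

/-- A (hybrid) Kripke structure: states, transition relation, labeling of
propositions by sets of states and of nominals by (single) states. -/
structure Kripke (W : Type) where
  rel : W → W → Prop
  vProp : ℕ → Set W
  vNom : ℕ → W

/-- Update of an assignment: `updAsg g x w` is the `x`-variant of `g` mapping `x` to `w`. -/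
def updAsg {W : Type} (g : ℕ → W) (x : ℕ) (w : W) : ℕ → W :=
  fun y => if y = x then w else g y

/-- The satisfaction relation `K, g, w ⊨ φ`. -/
def Sat {W : Type} (K : Kripke W) : (ℕ → W) → W → HForm → Prop
  | _, w, .prop p => w ∈ K.vProp p
  | _, w, .nom i => w = K.vNom i
  | g, w, .svar x => w = g x
  | _, _, .top => True
  | _, _, .bot => False
  | g, w, .neg φ => ¬ Sat K g w φ
  | g, w, .and φ ψ => Sat K g w φ ∧ Sat K g w ψ
  | g, w, .or φ ψ => Sat K g w φ ∨ Sat K g w ψ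
  | g, w, .dia φ => ∃ v, K.rel w v ∧ Sat K g v φ
  | g, w, .box φ => ∀ v, K.rel w v → Sat K g v φ
  | g, w, .bind x φ => Sat K (updAsg g x w) w φ
  | g, _, .atN i φ => Sat K g (K.vNom i) φ
  | g, _, .atV x φ => Sat K g (g x) φ

/-- Satisfiability over the class of all frames. -/
def SatisfiableAll (φ : HForm) : Prop :=
  ∃ (W : Type) (K : Kripke W) (g : ℕ → W) (w : W), Sat K g w φ

/-- Satisfiability over the class of transitive frames. -/
def SatisfiableTrans (φ : HForm) : Prop :=
  ∃ (W : Type) (K : Kripke W), Transitive K.rel ∧ ∃ (g : ℕ → W) (w : W), Sat K g w φ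

/-- Satisfiability over the class of total frames. -/
def SatisfiableTotal (φ : HForm) : Prop :=
  ∃ (W : Type) (K : Kripke W), (∀ w, ∃ v, K.rel w v) ∧ ∃ (g : ℕ → W) (w : W), Sat K g w φ

/-- Satisfiability over the class of ER frames. -/
def SatisfiableER (φ : HForm) : Prop :=
  ∃ (W : Type) (K : Kripke W), Equivalence K.rel ∧ ∃ (g : ℕ → W) (w : W), Sat K g w φ

/-- The singleton reflexive Kripke structure `K₁` labeling every proposition and
nominal with its unique state. -/
def K1 : Kripke Unit := ⟨fun _ _ => True, fun _ => Set.univ, fun _ => ()⟩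

/-- The assignment `g₁` mapping every state variable to the unique state of `K₁`. -/
def g1 : ℕ → Unit := fun _ => ()

/-- Unary operators of hybrid logic: `◇`, `□`, `↓x.`, `@_i` (nominal), `@_x` (state variable). -/
inductive HOp : Type where
  | dia : HOp
  | box : HOp
  | bind : ℕ → HOp
  | atN : ℕ → HOp
  | atV : ℕ → HOp
deriving DecidableEq

def applyOp : HOp → HForm → HForm
  | .dia, φ => .dia φ
  | .box, φ => .box φ
  | .bind x, φ => .bind x φ
  | .atN i, φ => .atN i φ
  | .atV x, φ => .atV x φ

/-- Apply a sequence of operators to a formula (head of the list outermost). -/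
def applyOps : List HOp → HForm → HForm
  | [], φ => φ
  | o :: os, φ => applyOp o (applyOps os φ)

/-- The operator is `◇`, `□` or a binder `↓y.` (no satisfaction operators). -/
def IsModalOrBind : HOp → Prop
  | .dia => True
  | .box => True
  | .bind _ => True
  | _ => False

/-- `λ` is a proposition, a negated proposition, a nominal, a negated nominal, a state
variable, `⊤`, `⊥`, or a negated state variable `¬x` with `x` not bound by any binder
`↓x.` occurring among the operators `ops`. -/
def GoodLeaf (ops : List HOp) : HForm → Prop
  | .prop _ => True
  | .neg (.prop _) => True
  | .nom _ => True
  | .neg (.nom _) => True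
  | .svar _ => True
  | .top => True
  | .bot => True
  | .neg (.svar x) => HOp.bind x ∉ ops
  | _ => False

/-!
A chain of `◇`, `□` and binders in front of `⊥` is false on every total frame, since each `□`
has a successor to pass to. Any other admissible leaf is satisfied at an isolated reflexive
state of a two-state model: there `◇` and `□` are transparent and `↓x.` only rebinds `x` to the
current state, which cannot falsify the leaf (`¬x` survives because `x` is never rebound).
-/

theorem SatisfiableER.satisfiableTotal {φ : HForm} (h : SatisfiableER φ) :
    SatisfiableTotal φ :=
  let ⟨W, K, hK, rest⟩ := h
  ⟨W, K, fun w => ⟨w, hK.refl w⟩, rest⟩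

theorem not_sat_applyOps_bot {W : Type} {K : Kripke W} (htot : ∀ w, ∃ v, K.rel w v)
    {ops : List HOp} (hops : ∀ o ∈ ops, IsModalOrBind o) (g : ℕ → W) (w : W) :
    ¬ Sat K g w (applyOps ops .bot) := by
  induction ops generalizing g w with
  | nil => exact id
  | cons o ops ih =>
    obtain ⟨ho, hops'⟩ := List.forall_mem_cons.mp hops
    cases o with
    | dia => rintro ⟨v, -, hv⟩; exact ih hops' g v hv
    | box => intro h; obtain ⟨v, hwv⟩ := htot w; exact ih hops' g v (h v hwv)
    | bind x => exact ih hops' _ w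
    | atN _ | atV _ => exact ho.elim

theorem sat_applyOps_of_isolated_loop {W : Type} {K : Kripke W} {w : W}
    (hw : ∀ v, K.rel w v ↔ v = w) {ops : List HOp} (hops : ∀ o ∈ ops, IsModalOrBind o)
    {P : (ℕ → W) → Prop} (hP : ∀ x g, HOp.bind x ∈ ops → P g → P (updAsg g x w))
    {lam : HForm} (hlam : ∀ g, P g → Sat K g w lam) (g : ℕ → W) (hg : P g) :
    Sat K g w (applyOps ops lam) := by
  induction ops generalizing g with
  | nil => exact hlam g hg
  | cons o ops ih =>
    obtain ⟨ho, hops'⟩ := List.forall_mem_cons.mp hops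
    have hP' x g (hx : HOp.bind x ∈ ops) := hP x g (List.mem_cons_of_mem _ hx)
    cases o with
    | dia => exact ⟨w, (hw w).mpr rfl, ih hops' hP' g hg⟩
    | box => intro v hwv; obtain rfl := (hw v).mp hwv; exact ih hops' hP' g hg
    | bind x => exact ih hops' hP' _ (hP x g List.mem_cons_self hg)
    | atN _ | atV _ => exact ho.elim

def twoLoops : Kripke Bool := ⟨Eq, fun _ => {true}, fun _ => true⟩

theorem satisfiableER_applyOps {ops : List HOp} {lam : HForm}
    (hops : ∀ o ∈ ops, IsModalOrBind o) (hlam : GoodLeaf ops lam) (hne : lam ≠ .bot) :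
    SatisfiableER (applyOps ops lam) := by
  suffices ∃ (w : Bool) (P : (ℕ → Bool) → Prop),
      (∀ x g, HOp.bind x ∈ ops → P g → P (updAsg g x w)) ∧
      (∀ g, P g → Sat twoLoops g w lam) ∧ P fun _ => true by
    obtain ⟨w, P, hP, hlamP, hg⟩ := this
    exact ⟨Bool, twoLoops, eq_equivalence, _, w,
      sat_applyOps_of_isolated_loop (fun _ => eq_comm) hops hP hlamP _ hg⟩
  cases lam with
  | prop _ | nom _ | top => exact ⟨true, fun _ => True, by simp, by simp [Sat, twoLoops], trivial⟩
  | svar x =>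
    refine ⟨true, fun g => ∀ y, g y = true, fun z g _ hg y => ?_, fun g hg => (hg x).symm,
      fun _ => rfl⟩
    unfold updAsg; split_ifs <;> simp [hg]
  | bot => exact absurd rfl hne
  | neg ψ =>
    cases ψ with
    | prop _ | nom _ => exact ⟨false, fun _ => True, by simp, by simp [Sat, twoLoops], trivial⟩
    | svar x =>
      refine ⟨false, fun g => g x = true, fun y g hy hg => ?_, fun g hg h => ?_, rfl⟩
      · have hyx : x ≠ y := by rintro rfl; exact hlam hy
        simpa [updAsg, hyx] using hg
      · exact Bool.false_ne_true ((h : false = g x).trans hg)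
    | _ => exact hlam.elim
  | _ => exact hlam.elim

/-- For `φ = P₁⋯Pₙλ` with each `Pᵢ ∈ {◇,□} ∪ {↓x.}` and `λ` a
(possibly negated) proposition, nominal, `⊤`, `⊥`, a state variable, or a negated
state variable not bound in `φ`: `φ` is unsatisfiable over the class of total frames
iff `λ = ⊥`, and likewise over the class of ER frames. -/
theorem unsat_total_ER_iff_bot (ops : List HOp) (lam : HForm)
    (hops : ∀ o ∈ ops, IsModalOrBind o) (hlam : GoodLeaf ops lam) :
    (¬ SatisfiableTotal (applyOps ops lam) ↔ lam = HForm.bot) ∧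
    (¬ SatisfiableER (applyOps ops lam) ↔ lam = HForm.bot) := by
  have hsat : lam ≠ .bot → SatisfiableER (applyOps ops lam) :=
    satisfiableER_applyOps hops hlam
  have hunsat : lam = .bot → ¬ SatisfiableTotal (applyOps ops lam) := by
    rintro rfl ⟨W, K, htot, g, w, h⟩
    exact not_sat_applyOps_bot htot hops g w h
  exact ⟨⟨not_imp_comm.mp fun hne => (hsat hne).satisfiableTotal, hunsat⟩,
    ⟨not_imp_comm.mp hsat, fun hbot h => hunsat hbot h.satisfiableTotal⟩⟩
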